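/- Let Â = A + εA₀ and B̂ = B + εB₀ be dual matrices in 𝔻^{m×n}. If B̂ is regular (i.e. B̂·Ŷ·B̂ = B̂ for some Ŷ ∈ 𝔻^{n×m}) and 𝒩(Â) = 𝒩(B̂), then Â is regular and ℛ(Âᵀ) = ℛ(B̂ᵀ). -/

import Mathlib

/-!
A regular matrix `N` with inner inverse `Y` has the lifting property: whenever `e • b` lies in
its null space, so does `b - Y N b`, which agrees with `b` after multiplication by `e`. Over `𝔻`
with `e = ε` this says that every null vector `b` of the standard part `A` of `Â = A + εA₀`
lifts to a null vector `b + εb₀` of `Â`, i.e. `A₀` maps `𝒩(A)` into `ℛ(A)`. The property only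
depends on the null space, so it passes from `B̂` to `Â`; and for `Â` it gives
`(I - AG) A₀ (I - GA) = 0` for an inner inverse `G` of `A`, which makes `G - εGA₀G` an inner
inverse of `Â`. Finally, two regular matrices with the same null space are left multiples of
each other, so their transposes have the same range.
-/

open Matrix

/-- The dual matrix `A + ε A₀` over the dual numbers `𝔻 = ℝ[ε]`, `ε² = 0`. -/
def dualMat {m n : ℕ} (A A₀ : Matrix (Fin m) (Fin n) ℝ) :
    Matrix (Fin m) (Fin n) (DualNumber ℝ) :=
  A.map (fun r => TrivSqZeroExt.inl r) + A₀.map (fun r => TrivSqZeroExt.inr r)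

open DualNumber TrivSqZeroExt

theorem LinearMap.exists_comp_comp_eq_self {K V W : Type*} [DivisionRing K] [AddCommGroup V]
    [Module K V] [AddCommGroup W] [Module K W] (f : V →ₗ[K] W) :
    ∃ g : W →ₗ[K] V, f ∘ₗ g ∘ₗ f = f := by
  obtain ⟨g, hg⟩ := f.rangeRestrict.exists_rightInverse_of_surjective f.range_rangeRestrict
  obtain ⟨C, hC⟩ := (LinearMap.range f).exists_isCompl
  refine ⟨g ∘ₗ (LinearMap.range f).projectionOnto C hC, LinearMap.ext fun v => ?_⟩
  have hπ : (LinearMap.range f).projectionOnto C hC (f v) = ⟨f v, LinearMap.mem_range_self f v⟩ :=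
    Submodule.projectionOnto_apply_left hC ⟨f v, LinearMap.mem_range_self f v⟩
  have hgf := congrArg Subtype.val (LinearMap.congr_fun hg ⟨f v, LinearMap.mem_range_self f v⟩)
  simp only [LinearMap.comp_apply, hπ]
  simpa using hgf

theorem Matrix.exists_mul_mul_eq_self {m n K : Type*} [Fintype m] [Fintype n] [DecidableEq m]
    [DecidableEq n] [Field K] (A : Matrix m n K) : ∃ G : Matrix n m K, A * G * A = A := by
  obtain ⟨g, hg⟩ := (toLin' A).exists_comp_comp_eq_self
  refine ⟨LinearMap.toMatrix' g, toLin'.injective ?_⟩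
  rwa [toLin'_mul, toLin'_mul, toLin'_toMatrix', LinearMap.comp_assoc]

section Kernel

variable {R : Type*} [CommRing R] {m n : Type*}

/-- For `e = ε` over `𝔻` and `S` the null space of `A + εA₀`: every null vector of `A` lifts to
one of `A + εA₀`. -/
def LiftsAlong (e : R) (S : Set (n → R)) : Prop :=
  ∀ b, e • b ∈ S → ∃ β ∈ S, e • β = e • b

variable [Fintype m]

theorem Matrix.transpose_range_subset_of_mul_eq {k : Type*} [Fintype k] {M : Matrix m n R}
    {N : Matrix k n R} {C : Matrix m k R} (h : C * N = M) :
    {v | ∃ γ, v = Mᵀ *ᵥ γ} ⊆ {v | ∃ γ, v = Nᵀ *ᵥ γ} := by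
  rintro _ ⟨γ, rfl⟩
  exact ⟨Cᵀ *ᵥ γ, by rw [← h, transpose_mul, mulVec_mulVec]⟩

variable [Fintype n]

theorem Matrix.mulVec_sub_mul_mulVec_eq_zero {N : Matrix m n R} {Y : Matrix n m R}
    (hN : N * Y * N = N) (v : n → R) : N *ᵥ (v - (Y * N) *ᵥ v) = 0 := by
  rw [mulVec_sub, mulVec_mulVec, ← Matrix.mul_assoc, hN, sub_self]

theorem Matrix.mul_mul_eq_of_ker_le {M N : Matrix m n R} {Y : Matrix n m R}
    (hker : ∀ v, N *ᵥ v = 0 → M *ᵥ v = 0) (hN : N * Y * N = N) : M * Y * N = M := by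
  refine ext_iff_mulVec.2 fun v => ?_
  have := hker _ (mulVec_sub_mul_mulVec_eq_zero hN v)
  rw [mulVec_sub, sub_eq_zero, mulVec_mulVec, ← Matrix.mul_assoc] at this
  exact this.symm

theorem Matrix.transpose_range_eq_of_ker_eq {M N : Matrix m n R} {X Y : Matrix n m R}
    (hM : M * X * M = M) (hN : N * Y * N = N)
    (hker : {β | M *ᵥ β = 0} = {β | N *ᵥ β = 0}) :
    {v | ∃ γ, v = Mᵀ *ᵥ γ} = {v | ∃ γ, v = Nᵀ *ᵥ γ} :=
  (transpose_range_subset_of_mul_eq (mul_mul_eq_of_ker_le (fun _ hv => hker.ge hv) hN)).antisymm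
    (transpose_range_subset_of_mul_eq (mul_mul_eq_of_ker_le (fun _ hv => hker.le hv) hM))

theorem Matrix.liftsAlong_ker_of_mul_mul_eq (e : R) {N : Matrix m n R} {Y : Matrix n m R}
    (hN : N * Y * N = N) : LiftsAlong e {β | N *ᵥ β = 0} := by
  intro b hb
  refine ⟨b - (Y * N) *ᵥ b, mulVec_sub_mul_mulVec_eq_zero hN b, ?_⟩
  have : e • ((Y * N) *ᵥ b) = 0 := by
    rw [← mulVec_smul, ← mulVec_mulVec, hb.out, mulVec_zero]
  rw [smul_sub, this, sub_zero]

theorem Matrix.sub_mul_mul_sub_eq_zero [DecidableEq m] [DecidableEq n] {A A₀ : Matrix m n R}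
    {G : Matrix n m R} (hG : A * G * A = A) (h : ∀ b, A *ᵥ b = 0 → ∃ c, A₀ *ᵥ b = A *ᵥ c) :
    (1 - A * G) * A₀ * (1 - G * A : Matrix n n R) = 0 := by
  refine ext_iff_mulVec.2 fun v => ?_
  have hAb : A *ᵥ ((1 - G * A) *ᵥ v) = 0 := by
    rw [mulVec_mulVec, Matrix.mul_sub, Matrix.mul_one, ← Matrix.mul_assoc, hG, sub_self,
      zero_mulVec]
  obtain ⟨c, hc⟩ := h _ hAb
  rw [← mulVec_mulVec, ← mulVec_mulVec, hc, mulVec_mulVec, Matrix.sub_mul, Matrix.one_mul, hG,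
    sub_self, zero_mulVec, zero_mulVec]

end Kernel

section Dual

variable {m n : ℕ}

theorem DualNumber.eps_mul {R : Type*} [Semiring R] (x : R[ε]) :
    (ε : R[ε]) * x = (inr (fst x) : R[ε]) := by
  ext <;> simp

theorem DualNumber.eps_smul_eq_eps_smul_iff {R ι : Type*} [Semiring R] {v w : ι → R[ε]} :
    (ε : R[ε]) • v = (ε : R[ε]) • w ↔ fst ∘ v = fst ∘ w := by
  simp only [funext_iff, Pi.smul_apply, smul_eq_mul, eps_mul, inr_injective.eq_iff,
    Function.comp_apply]

@[simp]
theorem fst_dualMat_apply (A A₀ : Matrix (Fin m) (Fin n) ℝ) (i j) :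
    fst (dualMat A A₀ i j) = A i j := by
  simp [dualMat]

@[simp]
theorem snd_dualMat_apply (A A₀ : Matrix (Fin m) (Fin n) ℝ) (i j) :
    snd (dualMat A A₀ i j) = A₀ i j := by
  simp [dualMat]

theorem fst_dualMat_mulVec (A A₀ : Matrix (Fin m) (Fin n) ℝ) (v : Fin n → DualNumber ℝ) :
    fst ∘ (dualMat A A₀ *ᵥ v) = A *ᵥ (fst ∘ v) := by
  funext i
  simp [mulVec, dotProduct, fst_sum]

theorem snd_dualMat_mulVec (A A₀ : Matrix (Fin m) (Fin n) ℝ) (v : Fin n → DualNumber ℝ) :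
    snd ∘ (dualMat A A₀ *ᵥ v) = A *ᵥ (snd ∘ v) + A₀ *ᵥ (fst ∘ v) := by
  funext i
  simp [mulVec, dotProduct, snd_sum, Finset.sum_add_distrib]

theorem dualMat_mul {p : ℕ} (A A₀ : Matrix (Fin m) (Fin n) ℝ) (C C₀ : Matrix (Fin n) (Fin p) ℝ) :
    dualMat A A₀ * dualMat C C₀ = dualMat (A * C) (A * C₀ + A₀ * C) := by
  ext i j
  · simp [mul_apply, fst_sum]
  · simp [mul_apply, snd_sum, Finset.sum_add_distrib]

theorem exists_mulVec_eq_of_liftsAlong {A A₀ : Matrix (Fin m) (Fin n) ℝ}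
    (h : LiftsAlong ε {β | dualMat A A₀ *ᵥ β = 0}) (b : Fin n → ℝ) (hb : A *ᵥ b = 0) :
    ∃ c, A₀ *ᵥ b = A *ᵥ c := by
  have hmem : (ε : ℝ[ε]) • (inl ∘ b) ∈ {β | dualMat A A₀ *ᵥ β = 0} := by
    show dualMat A A₀ *ᵥ ((ε : ℝ[ε]) • (inl ∘ b)) = 0
    rw [mulVec_smul, ← smul_zero (ε : ℝ[ε]), eps_smul_eq_eps_smul_iff, fst_dualMat_mulVec]
    exact hb
  obtain ⟨β, hβ, hεβ⟩ := h _ hmem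
  have hfst : fst ∘ β = b := eps_smul_eq_eps_smul_iff.1 hεβ
  have hsnd := congrArg (snd ∘ ·) hβ.out
  simp only [snd_dualMat_mulVec, hfst] at hsnd
  exact ⟨-(snd ∘ β), by rw [mulVec_neg, eq_neg_iff_add_eq_zero, add_comm]; exact hsnd⟩

theorem dualMat_mul_mul_eq_self {A A₀ : Matrix (Fin m) (Fin n) ℝ} {G : Matrix (Fin n) (Fin m) ℝ}
    (hG : A * G * A = A) (h : (1 - A * G) * A₀ * (1 - G * A : Matrix (Fin n) (Fin n) ℝ) = 0) :
    dualMat A A₀ * dualMat G (-(G * A₀ * G)) * dualMat A A₀ = dualMat A A₀ := by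
  rw [dualMat_mul, dualMat_mul, hG]
  congr 1
  rw [← sub_eq_zero, ← neg_eq_zero, ← h]
  simp only [Matrix.mul_sub, Matrix.sub_mul, Matrix.mul_one, Matrix.one_mul, Matrix.add_mul,
    Matrix.mul_neg, Matrix.neg_mul, Matrix.mul_assoc]
  abel

theorem exists_mul_mul_dualMat_eq_self_of_liftsAlong {A A₀ : Matrix (Fin m) (Fin n) ℝ}
    (h : LiftsAlong ε {β | dualMat A A₀ *ᵥ β = 0}) :
    ∃ X : Matrix (Fin n) (Fin m) (DualNumber ℝ),
      dualMat A A₀ * X * dualMat A A₀ = dualMat A A₀ := by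
  obtain ⟨G, hG⟩ := A.exists_mul_mul_eq_self
  exact ⟨_, dualMat_mul_mul_eq_self hG
    (sub_mul_mul_sub_eq_zero hG (exists_mulVec_eq_of_liftsAlong h))⟩

end Dual

/-- if `B̂ = B + ε B₀` is regular and `𝒩(Â) = 𝒩(B̂)`, then
`Â = A + ε A₀` is regular and `ℛ(Âᵀ) = ℛ(B̂ᵀ)`. -/
theorem stmt17 {m n : ℕ} (A A₀ B B₀ : Matrix (Fin m) (Fin n) ℝ)
    (hBreg : ∃ Y : Matrix (Fin n) (Fin m) (DualNumber ℝ),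
      dualMat B B₀ * Y * dualMat B B₀ = dualMat B B₀)
    (hnull : {β : Fin n → DualNumber ℝ | (dualMat A A₀).mulVec β = 0} =
      {β : Fin n → DualNumber ℝ | (dualMat B B₀).mulVec β = 0}) :
    (∃ X : Matrix (Fin n) (Fin m) (DualNumber ℝ),
      dualMat A A₀ * X * dualMat A A₀ = dualMat A A₀) ∧
    {v : Fin n → DualNumber ℝ | ∃ γ, v = (dualMat A A₀)ᵀ.mulVec γ} =
      {v : Fin n → DualNumber ℝ | ∃ γ, v = (dualMat B B₀)ᵀ.mulVec γ} := by
  obtain ⟨Y, hY⟩ := hBreg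
  have hlifts : LiftsAlong ε {β | dualMat A A₀ *ᵥ β = 0} :=
    hnull ▸ liftsAlong_ker_of_mul_mul_eq ε hY
  obtain ⟨X, hX⟩ := exists_mul_mul_dualMat_eq_self_of_liftsAlong hlifts
  exact ⟨⟨X, hX⟩, transpose_range_eq_of_ker_eq hX hY hnull⟩
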